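/- Let L > 0 and [a, b] ⊆ [0, L] with a < b. For every ρ ∈ (0, min(ρ_L^*, 4π²/(b−a)²)) and every x ∈ [0, L]: F_{a,b}(x, ρ, L) ≤ (b − a)(1+ρ) · (4π²/(4π² − ρ(b−a)²)) · ( (Si(ρL², 1) + (b+1)/L) / ((1−ρ)·Si(ρL², 1) + 2·Co(ρL², 1)/L) ) · (x + 1) + Q_{a,b}(x). -/

import Mathlib

open MeasureTheory ProbabilityTheory Real Filter Set
open scoped ENNReal NNReal

noncomputable section

/-- The standard Laplace distribution on `ℝ`, with density `t ↦ (1/2)·e^{−|t|}`. -/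
def lapMeasure : Measure ℝ :=
  MeasureTheory.volume.withDensity fun t => ENNReal.ofReal ((1 / 2) * Real.exp (-|t|))

variable {Ω : Type*} [MeasurableSpace Ω]

/-- `(X i)` are i.i.d. standard Laplace random variables on the probability space `(Ω, μ)`. -/
structure IsLaplaceWalk (μ : Measure Ω) (X : ℕ → Ω → ℝ) : Prop where
  prob : IsProbabilityMeasure μ
  meas : ∀ i, Measurable (X i)
  indep : iIndepFun X μ
  dist : ∀ i, μ.map (X i) = lapMeasure

/-- The random walk `S_k = x + X_1 + ⋯ + X_k` started at `x`. -/
def walk (x : ℝ) (X : ℕ → Ω → ℝ) (k : ℕ) (ω : Ω) : ℝ :=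
  x + ∑ i ∈ Finset.range k, X i ω

/-- The exit time `τ_L = min{k : S_k ∉ [0,L]}` of the walk started at `x`. -/
def exitTime (L x : ℝ) (X : ℕ → Ω → ℝ) (ω : Ω) : ℕ :=
  sInf {k | walk x X k ω ∉ Set.Icc 0 L}

/-- `ρ_L^*`: the smallest `ρ ≥ 0` with `cos(√ρ·L/2) − √ρ·sin(√ρ·L/2) = 0`. -/
def rhoStar (L : ℝ) : ℝ :=
  sInf {ρ : ℝ | 0 ≤ ρ ∧
    Real.cos (Real.sqrt ρ * L / 2) - Real.sqrt ρ * Real.sin (Real.sqrt ρ * L / 2) = 0}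

/-- `H_b^±(x, ρ, L) = E_x[Σ_{k=0}^{τ_L−1} (1+ρ)^k e^{±b S_k}]`, written as the Lebesgue
integral of `Σ_k (1+ρ)^k e^{s·b·S_k} 1{S_i ∈ [0,L] ∀ i ≤ k}` (the summand vanishes for
`k ≥ τ_L`); take `s = 1` for `H^+` and `s = −1` for `H^-`. -/
def Hfun (μ : Measure Ω) (X : ℕ → Ω → ℝ) (s b ρ L x : ℝ) : ℝ≥0∞ :=
  ∫⁻ ω, ∑' k : ℕ,
    (if ∀ i ≤ k, walk x X i ω ∈ Set.Icc 0 L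
      then ENNReal.ofReal ((1 + ρ) ^ k * Real.exp (s * b * walk x X k ω)) else 0) ∂μ

/-- Two-argument `Si`: `Si(α, y) = sin(√α·y)/√α` for `α > 0`, `y` at `α = 0`,
`sinh(√|α|·y)/√|α|` for `α < 0`. -/
def Si2 (α y : ℝ) : ℝ :=
  if 0 < α then Real.sin (Real.sqrt α * y) / Real.sqrt α
  else if α = 0 then y
  else Real.sinh (Real.sqrt |α| * y) / Real.sqrt |α|

/-- Two-argument `Co`: `Co(α, y) = cos(√α·y)` for `α > 0`, `1` at `α = 0`,
`cosh(√|α|·y)` for `α < 0`. -/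
def Co2 (α y : ℝ) : ℝ :=
  if 0 < α then Real.cos (Real.sqrt α * y)
  else if α = 0 then 1
  else Real.cosh (Real.sqrt |α| * y)

/-- `Q_{a,b}(x) = 1 − cos(2π(x−a)/(b−a))` on `[a,b]`, and `0` elsewhere. -/
def Qfun (a b x : ℝ) : ℝ :=
  if x ∈ Set.Icc a b then 1 - Real.cos (2 * Real.pi * (x - a) / (b - a)) else 0

/-- `F_{a,b}(x, ρ, L) = E_x[Σ_{k=0}^{τ_L−1} (1+ρ)^k Q_{a,b}(S_k)]`, written as the Lebesgue
integral of `Σ_k (1+ρ)^k Q_{a,b}(S_k) 1{S_i ∈ [0,L] ∀ i ≤ k}` (the summand vanishes for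
`k ≥ τ_L`). -/
def Ffun (μ : Measure Ω) (X : ℕ → Ω → ℝ) (a b ρ L x : ℝ) : ℝ≥0∞ :=
  ∫⁻ ω, ∑' k : ℕ,
    (if ∀ i ≤ k, walk x X i ω ∈ Set.Icc 0 L
      then ENNReal.ofReal ((1 + ρ) ^ k * Qfun a b (walk x X k ω)) else 0) ∂μ

/-!
Comparison with a supersolution. If `g ≥ 0` satisfies `Q(y) + (1+ρ) E[g(y + X₁)] ≤ g(y)` on
`[0, L]`, splitting off the first step of the walk shows by induction that every partial sum of
`F_{a,b}(x, ρ, L)` is at most `g(x)`. Since `e^{-|t|}/2` is the Green function of `1 - d²/dy²`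
on `[0, L]` with the Robin conditions `u(0) = u'(0)`, `u(L) = -u'(L)`, one may take
`g = Q + φ` on `[0, L]` (and `0` outside), where `φ'' + ρ φ = -(1+ρ) Q` with these boundary
conditions; then the supersolution inequality is an equality. With `r = √ρ` and
`A(u) = sin(r u)/r + cos(r u)`,
`φ(y) = C A(y) - (1+ρ) ∫₀^y sin(r(y-s))/r Q(s) ds`,
`C = (1+ρ)/(A(L) + A'(L)) ∫₀^L A(L-s) Q(s) ds`.
Below `ρ_L^*` one has `r L + 2 arctan r < π`, which makes `A > 0` on `[0, L]` and
`A(L) + A'(L) > 0`; hence `φ ≥ 0` and `φ(x) ≤ C (x + 1)`. Finally `A(L - s) ≤ sin(rL)/r + b + 1`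
on the support of `Q` and `∫ Q = b - a` bound `C`, and `4π²/(4π² - ρ(b-a)²) ≥ 1`.
-/

lemma walk_zero {α : Type*} (x : ℝ) (X : ℕ → α → ℝ) (ω : α) : walk x X 0 ω = x := by
  simp [walk]

lemma walk_succ {α : Type*} (x : ℝ) (X : ℕ → α → ℝ) (k : ℕ) (ω : α) :
    walk x X (k + 1) ω = walk (x + X 0 ω) (fun i => X (i + 1)) k ω := by
  simp only [walk, Finset.sum_range_succ']
  ring

namespace IsLaplaceWalk

variable {μ : Measure Ω} {X : ℕ → Ω → ℝ}

lemma shift (h : IsLaplaceWalk μ X) : IsLaplaceWalk μ (fun i => X (i + 1)) where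
  prob := h.prob
  meas i := h.meas (i + 1)
  indep := h.indep.precomp (add_left_injective 1)
  dist i := h.dist (i + 1)

lemma indepFun_head_tail (h : IsLaplaceWalk μ X) :
    IndepFun (X 0) (fun ω i => X (i + 1) ω) μ := by
  set M : Set ℕ → MeasurableSpace Ω := fun S => ⨆ i ∈ S, MeasurableSpace.comap (X i) inferInstance
  have h0 : MeasurableSpace.comap (X 0) inferInstance ≤ M {0} :=
    le_iSup₂ (f := fun i (_ : i ∈ ({0} : Set ℕ)) => MeasurableSpace.comap (X i) inferInstance) 0 rfl
  have hT : MeasurableSpace.comap (fun ω i => X (i + 1) ω) MeasurableSpace.pi ≤ M {0}ᶜ := by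
    simp only [MeasurableSpace.pi, MeasurableSpace.comap_iSup, MeasurableSpace.comap_comp]
    exact iSup_le fun j => le_iSup₂
      (f := fun i (_ : i ∈ ({0}ᶜ : Set ℕ)) => MeasurableSpace.comap (X i) inferInstance)
      (j + 1) (by simp)
  exact indep_of_indep_of_le_right (indep_of_indep_of_le_left
    (indep_iSup_of_disjoint (fun i => (h.meas i).comap_le) h.indep disjoint_compl_right) h0) hT

lemma lintegral_head_tail (h : IsLaplaceWalk μ X) {F : ℝ × (ℕ → ℝ) → ℝ≥0∞}
    (hF : Measurable F) :
    ∫⁻ ω, F (X 0 ω, fun i => X (i + 1) ω) ∂μ =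
      ∫⁻ s, ∫⁻ ω, F (s, fun i => X (i + 1) ω) ∂μ ∂lapMeasure := by
  have hT : Measurable fun ω i => X (i + 1) ω := measurable_pi_lambda _ fun i => h.meas _
  have := h.prob
  rw [← lintegral_map hF ((h.meas 0).prodMk hT),
    (indepFun_iff_map_prod_eq_prod_map_map (h.meas 0).aemeasurable hT.aemeasurable).1
      h.indepFun_head_tail, lintegral_prod _ hF.aemeasurable, h.dist 0]
  exact lintegral_congr fun s => lintegral_map (hF.comp measurable_prodMk_left) hT

end IsLaplaceWalk

-- `Ffun μ X a b ρ L x` unfolds to `∫⁻ ω, ∑' k, occupationTerm (Qfun a b) ρ L x X k ω ∂μ`.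
def occupationTerm {α : Type*} (f : ℝ → ℝ) (ρ L x : ℝ) (X : ℕ → α → ℝ) (k : ℕ) (ω : α) :
    ℝ≥0∞ :=
  if ∀ i ≤ k, walk x X i ω ∈ Icc 0 L then ENNReal.ofReal ((1 + ρ) ^ k * f (walk x X k ω))
  else 0

section Occupation

variable {α : Type*} {f : ℝ → ℝ} {ρ L x : ℝ} {X : ℕ → α → ℝ}

lemma occupationTerm_zero (hx : x ∈ Icc 0 L) (ω : α) :
    occupationTerm f ρ L x X 0 ω = ENNReal.ofReal (f x) := by
  rw [occupationTerm, if_pos fun i hi => by rwa [Nat.le_zero.1 hi, walk_zero], walk_zero, pow_zero,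
    one_mul]

lemma occupationTerm_of_notMem (hx : x ∉ Icc 0 L) (k : ℕ) (ω : α) :
    occupationTerm f ρ L x X k ω = 0 :=
  if_neg fun h => hx (walk_zero x X ω ▸ h 0 k.zero_le)

lemma occupationTerm_succ (hρ : 0 ≤ 1 + ρ) (hx : x ∈ Icc 0 L) (k : ℕ) (ω : α) :
    occupationTerm f ρ L x X (k + 1) ω =
      ENNReal.ofReal (1 + ρ) * occupationTerm f ρ L (x + X 0 ω) (fun i => X (i + 1)) k ω := by
  have hpath : (∀ i ≤ k + 1, walk x X i ω ∈ Icc 0 L) ↔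
      ∀ i ≤ k, walk (x + X 0 ω) (fun i => X (i + 1)) i ω ∈ Icc 0 L := by
    refine ⟨fun h i hi => walk_succ x X i ω ▸ h (i + 1) (by omega), fun h i hi => ?_⟩
    cases i with
    | zero => rwa [walk_zero]
    | succ i => exact walk_succ x X i ω ▸ h i (by omega)
  unfold occupationTerm
  split_ifs with h1 h2 h2
  · rw [← ENNReal.ofReal_mul hρ, walk_succ, pow_succ', mul_assoc]
  · exact absurd (hpath.1 h1) h2
  · exact absurd (hpath.2 h2) h1
  · rw [mul_zero]

lemma measurable_occupationTerm [MeasurableSpace α] (hf : Measurable f)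
    (hX : ∀ i, Measurable (X i)) {g : α → ℝ} (hg : Measurable g) (k : ℕ) :
    Measurable fun ω => occupationTerm f ρ L (g ω) X k ω := by
  have hwalk : ∀ i, Measurable fun ω => walk (g ω) X i ω := fun i =>
    hg.add (Finset.measurable_sum _ fun j _ => hX j)
  refine Measurable.ite ?_ (by fun_prop) measurable_const
  simp only [ofPred_forall]
  exact MeasurableSet.iInter fun i => MeasurableSet.iInter fun _ => hwalk i measurableSet_Icc

end Occupation

section Supersolution

variable {μ : Measure Ω} {f : ℝ → ℝ} {ρ L : ℝ} {g : ℝ → ℝ≥0∞}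

lemma lintegral_sum_occupationTerm_le (hf : Measurable f) (hρ : 0 ≤ 1 + ρ)
    (hg : ∀ y ∈ Icc 0 L,
      ENNReal.ofReal (f y) + ENNReal.ofReal (1 + ρ) * ∫⁻ s, g (y + s) ∂lapMeasure ≤ g y)
    (n : ℕ) {X : ℕ → Ω → ℝ} (h : IsLaplaceWalk μ X) (y : ℝ) :
    ∫⁻ ω, ∑ k ∈ Finset.range n, occupationTerm f ρ L y X k ω ∂μ ≤ g y := by
  induction n generalizing X y with
  | zero => simp
  | succ n ih =>
    by_cases hy : y ∈ Icc 0 L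
    swap
    · simp [occupationTerm_of_notMem hy]
    have := h.prob
    let F : ℝ × (ℕ → ℝ) → ℝ≥0∞ := fun p =>
      ∑ k ∈ Finset.range n, occupationTerm f ρ L (y + p.1) (fun i v => v.2 i) k p
    have hF : Measurable F := Finset.measurable_sum _ fun k _ =>
      measurable_occupationTerm hf (fun i => (measurable_pi_apply i).comp measurable_snd)
        (measurable_const.add measurable_fst) k
    have hstep : ∀ ω, ∑ k ∈ Finset.range (n + 1), occupationTerm f ρ L y X k ω =
        ENNReal.ofReal (f y) + ENNReal.ofReal (1 + ρ) * F (X 0 ω, fun i => X (i + 1) ω) := by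
      intro ω
      simp only [Finset.sum_range_succ', occupationTerm_succ hρ hy, occupationTerm_zero hy,
        ← Finset.mul_sum, F]
      rw [add_comm]
      rfl
    calc ∫⁻ ω, ∑ k ∈ Finset.range (n + 1), occupationTerm f ρ L y X k ω ∂μ
        = ENNReal.ofReal (f y) + ENNReal.ofReal (1 + ρ) *
            ∫⁻ s, ∫⁻ ω, F (s, fun i => X (i + 1) ω) ∂μ ∂lapMeasure := by
          rw [lintegral_congr hstep, lintegral_add_left measurable_const, lintegral_const,
            measure_univ, mul_one, lintegral_const_mul' _ _ ENNReal.ofReal_ne_top,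
            h.lintegral_head_tail hF]
      _ ≤ ENNReal.ofReal (f y) + ENNReal.ofReal (1 + ρ) * ∫⁻ s, g (y + s) ∂lapMeasure := by
          gcongr with s
          exact ih h.shift (y + s)
      _ ≤ g y := hg y hy

lemma lintegral_tsum_occupationTerm_le (hf : Measurable f) (hρ : 0 ≤ 1 + ρ)
    (hg : ∀ y ∈ Icc 0 L,
      ENNReal.ofReal (f y) + ENNReal.ofReal (1 + ρ) * ∫⁻ s, g (y + s) ∂lapMeasure ≤ g y)
    {X : ℕ → Ω → ℝ} (h : IsLaplaceWalk μ X) (x : ℝ) :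
    ∫⁻ ω, ∑' k, occupationTerm f ρ L x X k ω ∂μ ≤ g x := by
  have hmeas k : Measurable fun ω => occupationTerm f ρ L x X k ω :=
    measurable_occupationTerm hf h.meas measurable_const k
  rw [lintegral_tsum fun k => (hmeas k).aemeasurable]
  refine ENNReal.tsum_le_of_sum_range_le fun n => ?_
  rw [← lintegral_finsetSum _ fun k _ => hmeas k]
  exact lintegral_sum_occupationTerm_le hf hρ hg n h x

end Supersolution

lemma lintegral_lapMeasure_indicator {u : ℝ → ℝ} (hu : Continuous u) {L : ℝ} (hL : 0 ≤ L)
    (hu0 : ∀ t ∈ Icc 0 L, 0 ≤ u t) (y : ℝ) :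
    ∫⁻ s, (Icc 0 L).indicator (fun t => ENNReal.ofReal (u t)) (y + s) ∂lapMeasure =
      ENNReal.ofReal (∫ t in 0..L, u t * (1 / 2 * exp (-|y - t|))) := by
  have hint : IntegrableOn (fun t => u t * (1 / 2 * exp (-|y - t|))) (Icc 0 L) :=
    (by fun_prop : Continuous fun t => u t * (1 / 2 * exp (-|y - t|))).integrableOn_Icc
  have hmeas : Measurable fun s => (Icc 0 L).indicator (fun t => ENNReal.ofReal (u t)) (y + s) :=
    (hu.measurable.ennreal_ofReal.indicator measurableSet_Icc).comp (measurable_const_add y)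
  rw [intervalIntegral.integral_of_le hL, ← integral_Icc_eq_integral_Ioc,
    ofReal_integral_eq_lintegral_ofReal hint
      ((ae_restrict_iff' measurableSet_Icc).2 (ae_of_all _ fun t ht =>
        mul_nonneg (hu0 t ht) (by positivity))),
    lapMeasure, lintegral_withDensity_eq_lintegral_mul _ (by fun_prop) hmeas,
    ← lintegral_indicator measurableSet_Icc,
    ← lintegral_add_left_eq_self
      ((Icc 0 L).indicator fun t => ENNReal.ofReal (u t * (1 / 2 * exp (-|y - t|)))) y]
  refine lintegral_congr fun s => ?_
  simp only [Pi.mul_apply]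
  by_cases hs : y + s ∈ Icc 0 L
  · rw [indicator_of_mem hs, indicator_of_mem hs, ← ENNReal.ofReal_mul (by positivity),
      sub_add_cancel_left, abs_neg, mul_comm]
  · rw [indicator_of_notMem hs, indicator_of_notMem hs, mul_zero]

lemma integral_mul_laplaceKernel_eq {u u' w : ℝ → ℝ} {L y : ℝ}
    (hu : ∀ t, HasDerivAt u (u' t) t) (hu' : ∀ t, HasDerivAt u' (u t - w t) t)
    (hw : Continuous w) (h0 : u 0 = u' 0) (hL : u L = -u' L) (hy : y ∈ Icc 0 L) :
    ∫ t in 0..L, w t * (1 / 2 * exp (-|y - t|)) = u y := by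
  -- `(e^t (u - u'))' = e^t w` and `(-e^{-t} (u + u'))' = e^{-t} w`
  have hleft : ∫ t in 0..y, exp t * w t = exp y * (u y - u' y) := by
    rw [intervalIntegral.integral_eq_sub_of_hasDerivAt (f := fun t => exp t * (u t - u' t))
      (fun t _ => ((hasDerivAt_exp t).mul ((hu t).sub (hu' t))).congr_deriv
        (by simp only [Pi.sub_apply]; ring))
      ((by fun_prop : Continuous fun t => exp t * w t).intervalIntegrable _ _), h0]
    simp
  have hright : ∫ t in y..L, exp (-t) * w t = exp (-y) * (u y + u' y) := by
    rw [intervalIntegral.integral_eq_sub_of_hasDerivAt (f := fun t => -(exp (-t) * (u t + u' t)))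
      (fun t _ => ((hasDerivAt_neg t).exp.mul ((hu t).add (hu' t))).neg.congr_deriv
        (by simp only [Pi.add_apply]; ring))
      ((by fun_prop : Continuous fun t => exp (-t) * w t).intervalIntegrable _ _), hL]
    simp
  have h1 : ∫ t in 0..y, w t * (1 / 2 * exp (-|y - t|)) =
      exp (-y) / 2 * ∫ t in 0..y, exp t * w t := by
    rw [← intervalIntegral.integral_const_mul]
    refine intervalIntegral.integral_congr fun t ht => ?_
    rw [uIcc_of_le hy.1] at ht
    rw [abs_of_nonneg (sub_nonneg.2 ht.2), neg_sub, sub_eq_add_neg, exp_add]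
    ring
  have h2 : ∫ t in y..L, w t * (1 / 2 * exp (-|y - t|)) =
      exp y / 2 * ∫ t in y..L, exp (-t) * w t := by
    rw [← intervalIntegral.integral_const_mul]
    refine intervalIntegral.integral_congr fun t ht => ?_
    rw [uIcc_of_le hy.2] at ht
    rw [abs_of_nonpos (sub_nonpos.2 ht.1), neg_neg, sub_eq_add_neg, exp_add]
    ring
  have hc : Continuous fun t => w t * (1 / 2 * exp (-|y - t|)) := by fun_prop
  rw [← intervalIntegral.integral_add_adjacent_intervals (hc.intervalIntegrable 0 y)
    (hc.intervalIntegrable y L), h1, h2, hleft, hright, exp_neg]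
  field_simp
  ring

def leftMode (r u : ℝ) : ℝ := sin (r * u) / r + cos (r * u)

def leftModeDeriv (r u : ℝ) : ℝ := cos (r * u) - r * sin (r * u)

def duhamel (r : ℝ) (q : ℝ → ℝ) (y : ℝ) : ℝ := ∫ s in 0..y, sin (r * (y - s)) / r * q s

def duhamelDeriv (r : ℝ) (q : ℝ → ℝ) (y : ℝ) : ℝ := ∫ s in 0..y, cos (r * (y - s)) * q s

section Modes

variable {r : ℝ}

lemma hasDerivAt_leftMode (hr : r ≠ 0) (u : ℝ) :
    HasDerivAt (leftMode r) (leftModeDeriv r u) u := by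
  have hru := (hasDerivAt_id u).const_mul r
  have h := (hru.sin.div_const r).add hru.cos
  refine h.congr_deriv ?_
  simp only [leftModeDeriv, id]
  field_simp
  ring

lemma hasDerivAt_leftModeDeriv (u : ℝ) :
    HasDerivAt (leftModeDeriv r) (-r ^ 2 * leftMode r u) u := by
  have hru := (hasDerivAt_id u).const_mul r
  have h := hru.cos.sub (hru.sin.const_mul r)
  refine h.congr_deriv ?_
  rcases eq_or_ne r 0 with rfl | hr
  · simp
  · simp only [leftMode, id]
    field_simp
    ring

@[fun_prop]
lemma continuous_leftMode (r : ℝ) : Continuous (leftMode r) := by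
  unfold leftMode
  fun_prop

lemma leftMode_zero : leftMode r 0 = 1 := by simp [leftMode]

lemma leftModeDeriv_zero : leftModeDeriv r 0 = 1 := by simp [leftModeDeriv]

variable {q : ℝ → ℝ}

lemma duhamel_eq (hq : Continuous q) (y : ℝ) :
    duhamel r q y = (sin (r * y) * (∫ s in 0..y, cos (r * s) * q s) -
      cos (r * y) * ∫ s in 0..y, sin (r * s) * q s) / r := by
  rw [sub_div, mul_div_right_comm, mul_div_right_comm (cos _),
    ← intervalIntegral.integral_const_mul, ← intervalIntegral.integral_const_mul,
    ← intervalIntegral.integral_sub (Continuous.intervalIntegrable (by fun_prop) _ _)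
      (Continuous.intervalIntegrable (by fun_prop) _ _)]
  refine intervalIntegral.integral_congr fun s _ => ?_
  simp only [mul_sub, sin_sub]
  ring

lemma duhamelDeriv_eq (hq : Continuous q) (y : ℝ) :
    duhamelDeriv r q y = cos (r * y) * (∫ s in 0..y, cos (r * s) * q s) +
      sin (r * y) * ∫ s in 0..y, sin (r * s) * q s := by
  rw [← intervalIntegral.integral_const_mul, ← intervalIntegral.integral_const_mul,
    ← intervalIntegral.integral_add (Continuous.intervalIntegrable (by fun_prop) _ _)
    (Continuous.intervalIntegrable (by fun_prop) _ _)]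
  refine intervalIntegral.integral_congr fun s _ => ?_
  simp only [mul_sub, cos_sub]
  ring

lemma hasDerivAt_duhamel (hr : r ≠ 0) (hq : Continuous q) (y : ℝ) :
    HasDerivAt (duhamel r q) (duhamelDeriv r q y) y := by
  have hc := ((by fun_prop : Continuous fun s => cos (r * s) * q s).integral_hasStrictDerivAt
    0 y).hasDerivAt
  have hs := ((by fun_prop : Continuous fun s => sin (r * s) * q s).integral_hasStrictDerivAt
    0 y).hasDerivAt
  have h := (((((hasDerivAt_id y).const_mul r).sin).mul hc).sub
    ((((hasDerivAt_id y).const_mul r).cos).mul hs)).div_const r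
  rw [funext (duhamel_eq hq), duhamelDeriv_eq hq]
  refine h.congr_deriv ?_
  simp only [id]
  field_simp
  ring

lemma hasDerivAt_duhamelDeriv (hq : Continuous q) (y : ℝ) :
    HasDerivAt (duhamelDeriv r q) (q y - r ^ 2 * duhamel r q y) y := by
  have hc := ((by fun_prop : Continuous fun s => cos (r * s) * q s).integral_hasStrictDerivAt
    0 y).hasDerivAt
  have hs := ((by fun_prop : Continuous fun s => sin (r * s) * q s).integral_hasStrictDerivAt
    0 y).hasDerivAt
  have h := ((((hasDerivAt_id y).const_mul r).cos).mul hc).add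
    ((((hasDerivAt_id y).const_mul r).sin).mul hs)
  rw [funext (duhamelDeriv_eq hq), duhamel_eq hq]
  refine h.congr_deriv ?_
  rcases eq_or_ne r 0 with rfl | hr
  · simp
  · simp only [id]
    field_simp
    linear_combination q y * sin_sq_add_cos_sq (r * y)

lemma duhamel_add_duhamelDeriv (hq : Continuous q) (y : ℝ) :
    duhamel r q y + duhamelDeriv r q y = ∫ s in 0..y, leftMode r (y - s) * q s := by
  rw [duhamel, duhamelDeriv, ← intervalIntegral.integral_add
    (Continuous.intervalIntegrable (by fun_prop) _ _)
    (Continuous.intervalIntegrable (by fun_prop) _ _)]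
  simp only [leftMode, add_mul]

end Modes

/-- Up to sign, the constant Wronskian of `leftMode r` and `fun y => leftMode r (L - y)`. -/
def modeWronskian (r L : ℝ) : ℝ := leftMode r L + leftModeDeriv r L

def robinCoeff (r L : ℝ) (q : ℝ → ℝ) : ℝ :=
  (1 + r ^ 2) / modeWronskian r L * ∫ s in 0..L, leftMode r (L - s) * q s

def robinSolution (r L : ℝ) (q : ℝ → ℝ) (y : ℝ) : ℝ :=
  robinCoeff r L q * leftMode r y - (1 + r ^ 2) * duhamel r q y

def robinSolutionDeriv (r L : ℝ) (q : ℝ → ℝ) (y : ℝ) : ℝ :=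
  robinCoeff r L q * leftModeDeriv r y - (1 + r ^ 2) * duhamelDeriv r q y

section Robin

variable {r L : ℝ} {q : ℝ → ℝ}

lemma hasDerivAt_robinSolution (hr : r ≠ 0) (hq : Continuous q) (y : ℝ) :
    HasDerivAt (robinSolution r L q) (robinSolutionDeriv r L q y) y :=
  ((hasDerivAt_leftMode hr y).const_mul _).sub ((hasDerivAt_duhamel hr hq y).const_mul _)

lemma hasDerivAt_robinSolutionDeriv (hq : Continuous q) (y : ℝ) :
    HasDerivAt (robinSolutionDeriv r L q)
      (robinSolution r L q y - (1 + r ^ 2) * (q y + robinSolution r L q y)) y := by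
  refine (((hasDerivAt_leftModeDeriv y).const_mul _).sub
    ((hasDerivAt_duhamelDeriv hq y).const_mul _)).congr_deriv ?_
  simp only [robinSolution]
  ring

lemma continuous_robinSolution (hr : r ≠ 0) (hq : Continuous q) :
    Continuous (robinSolution r L q) :=
  continuous_iff_continuousAt.2 fun y => (hasDerivAt_robinSolution hr hq y).continuousAt

lemma robinSolution_zero : robinSolution r L q 0 = robinSolutionDeriv r L q 0 := by
  simp [robinSolution, robinSolutionDeriv, leftMode_zero, leftModeDeriv_zero, duhamel,
    duhamelDeriv]

lemma robinSolution_right (hq : Continuous q) (hD : modeWronskian r L ≠ 0) :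
    robinSolution r L q L = -robinSolutionDeriv r L q L := by
  have h := duhamel_add_duhamelDeriv (r := r) hq L
  rw [eq_neg_iff_add_eq_zero, robinSolution, robinSolutionDeriv, robinCoeff, ← h]
  rw [modeWronskian] at hD ⊢
  field_simp
  ring

lemma integral_mul_laplaceKernel_robinSolution (hr : r ≠ 0) (hq : Continuous q)
    (hD : modeWronskian r L ≠ 0) {y : ℝ} (hy : y ∈ Icc 0 L) :
    (1 + r ^ 2) * ∫ t in 0..L, (q t + robinSolution r L q t) * (1 / 2 * exp (-|y - t|)) =
      robinSolution r L q y := by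
  rw [← intervalIntegral.integral_const_mul]
  simp only [← mul_assoc (1 + r ^ 2)]
  exact integral_mul_laplaceKernel_eq (hasDerivAt_robinSolution hr hq)
    (hasDerivAt_robinSolutionDeriv hq)
    (continuous_const.mul (hq.add (continuous_robinSolution hr hq)))
    robinSolution_zero (robinSolution_right hq hD) hy

end Robin

lemma sin_add_mul_cos_eq (x r : ℝ) : sin x + r * cos x = √(1 + r ^ 2) * sin (x + arctan r) := by
  rw [sin_add, sin_arctan, cos_arctan]
  field_simp

lemma cos_sub_mul_sin_eq (x r : ℝ) : cos x - r * sin x = √(1 + r ^ 2) * cos (x + arctan r) := by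
  rw [cos_add, sin_arctan, cos_arctan]
  field_simp

section Admissible

variable {r L : ℝ}

lemma mul_leftMode_eq (hr : r ≠ 0) (u : ℝ) :
    r * leftMode r u = √(1 + r ^ 2) * sin (r * u + arctan r) := by
  rw [← sin_add_mul_cos_eq, leftMode]
  field_simp

lemma mul_modeWronskian_eq (hr : r ≠ 0) :
    r * modeWronskian r L = (1 + r ^ 2) * sin (r * L + 2 * arctan r) := by
  have h2 : √(1 + r ^ 2) ^ 2 = 1 + r ^ 2 := sq_sqrt (by positivity)
  rw [two_mul, ← add_assoc, sin_add, sin_add, cos_add, sin_arctan, cos_arctan,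
    modeWronskian, leftMode, leftModeDeriv]
  field_simp
  rw [h2]

lemma leftMode_pos (hr : 0 < r) (hrL : r * L + 2 * arctan r < π) {u : ℝ} (hu : u ∈ Icc 0 L) :
    0 < leftMode r u := by
  have hα : 0 < arctan r := arctan_pos.2 hr
  have hsin : 0 < sin (r * u + arctan r) := sin_pos_of_pos_of_lt_pi (by nlinarith [hu.1])
    (by nlinarith [hu.2])
  have := mul_leftMode_eq hr.ne' u
  have : 0 < r * leftMode r u := by rw [this]; positivity
  exact pos_of_mul_pos_right this hr.le

lemma modeWronskian_pos (hr : 0 < r) (hL : 0 ≤ L) (hrL : r * L + 2 * arctan r < π) :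
    0 < modeWronskian r L := by
  have hα : 0 < arctan r := arctan_pos.2 hr
  have hsin : 0 < sin (r * L + 2 * arctan r) := sin_pos_of_pos_of_lt_pi (by positivity) hrL
  have : 0 < r * modeWronskian r L := by
    rw [mul_modeWronskian_eq hr.ne']; positivity
  exact pos_of_mul_pos_right this hr.le

variable {q : ℝ → ℝ}

lemma leftMode_le_add_one (hr : 0 < r) {u : ℝ} (hu : 0 ≤ u) : leftMode r u ≤ u + 1 := by
  have h : sin (r * u) / r ≤ u := by
    rw [div_le_iff₀ hr, mul_comm u]
    exact sin_le (by positivity)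
  rw [leftMode]
  linarith [cos_le_one (r * u)]

lemma leftMode_sub_le {s : ℝ} (hr : 0 < r) (hsin : 0 ≤ sin (r * L)) (hs : 0 ≤ s) :
    leftMode r (L - s) ≤ sin (r * L) / r + s + 1 := by
  have h1 : sin (r * L) * cos (r * s) ≤ sin (r * L) := mul_le_of_le_one_right hsin (cos_le_one _)
  have h2 : -(cos (r * L) * sin (r * s)) ≤ r * s := by
    calc -(cos (r * L) * sin (r * s)) ≤ |cos (r * L) * sin (r * s)| := neg_le_abs _
      _ ≤ |sin (r * s)| := by
        rw [abs_mul]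
        exact mul_le_of_le_one_left (abs_nonneg _) (abs_cos_le_one _)
      _ ≤ r * s := abs_sin_le_abs.trans (abs_of_nonneg (by positivity)).le
  have h3 : sin (r * (L - s)) / r ≤ sin (r * L) / r + s := by
    rw [div_add' _ _ _ hr.ne', div_le_div_iff_of_pos_right hr, mul_sub, sin_sub]
    linarith
  rw [leftMode]
  linarith [cos_le_one (r * (L - s))]

lemma modeWronskian_mul_sin_div (hr : r ≠ 0) (y s : ℝ) :
    modeWronskian r L * (sin (r * (y - s)) / r) =
      leftMode r y * leftMode r (L - s) - leftMode r s * leftMode r (L - y) := by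
  simp only [modeWronskian, leftMode, leftModeDeriv, mul_sub, sin_sub, cos_sub]
  field_simp
  ring

lemma duhamel_nonneg (hr : 0 < r) (hrL : r * L + 2 * arctan r < π)
    (hq0 : ∀ s ∈ Icc 0 L, 0 ≤ q s) {y : ℝ} (hy : y ∈ Icc 0 L) : 0 ≤ duhamel r q y := by
  have hα : 0 < arctan r := arctan_pos.2 hr
  refine intervalIntegral.integral_nonneg hy.1 fun s hs => mul_nonneg (div_nonneg ?_ hr.le)
    (hq0 s ⟨hs.1, hs.2.trans hy.2⟩)
  exact sin_nonneg_of_nonneg_of_le_pi (by nlinarith [hs.2]) (by nlinarith [hs.1, hy.2])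

lemma robinCoeff_nonneg (hr : 0 < r) (hL : 0 ≤ L) (hrL : r * L + 2 * arctan r < π)
    (hq0 : ∀ s ∈ Icc 0 L, 0 ≤ q s) : 0 ≤ robinCoeff r L q :=
  mul_nonneg (div_nonneg (by positivity) (modeWronskian_pos hr hL hrL).le)
    (intervalIntegral.integral_nonneg hL fun s hs => mul_nonneg
      (leftMode_pos hr hrL ⟨by linarith [hs.2], by linarith [hs.1]⟩).le (hq0 s hs))

lemma duhamel_le_robinCoeff_mul (hr : 0 < r) (hrL : r * L + 2 * arctan r < π)
    (hq : Continuous q) (hq0 : ∀ s ∈ Icc 0 L, 0 ≤ q s) {y : ℝ} (hy : y ∈ Icc 0 L) :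
    (1 + r ^ 2) * duhamel r q y ≤ robinCoeff r L q * leftMode r y := by
  have hD := modeWronskian_pos hr (hy.1.trans hy.2) hrL
  have hA : ∀ s ∈ Icc 0 L, 0 < leftMode r s := fun s hs => leftMode_pos hr hrL hs
  -- the Duhamel kernel is the Green kernel minus `leftMode r s * leftMode r (L - y) / D ≥ 0`
  have hkernel : ∀ s ∈ Icc 0 y, sin (r * (y - s)) / r * q s ≤
      leftMode r y / modeWronskian r L * (leftMode r (L - s) * q s) := by
    intro s hs
    have hsL : s ∈ Icc 0 L := ⟨hs.1, hs.2.trans hy.2⟩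
    rw [← mul_assoc]
    refine mul_le_mul_of_nonneg_right ?_ (hq0 s hsL)
    rw [div_mul_eq_mul_div, le_div_iff₀ hD, mul_comm, modeWronskian_mul_sin_div hr.ne']
    nlinarith [hA s hsL, hA (L - y) ⟨by linarith [hy.2], by linarith [hy.1]⟩]
  have htail : ∫ s in 0..y, leftMode r (L - s) * q s ≤ ∫ s in 0..L, leftMode r (L - s) * q s :=
    intervalIntegral.integral_mono_interval le_rfl hy.1 hy.2
      ((ae_restrict_iff' measurableSet_Ioc).2 (ae_of_all _ fun s hs => mul_nonneg
        (hA _ ⟨by linarith [hs.2], by linarith [hs.1]⟩).le (hq0 s (Ioc_subset_Icc_self hs))))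
      (Continuous.intervalIntegrable (by fun_prop) _ _)
  calc (1 + r ^ 2) * duhamel r q y
      ≤ (1 + r ^ 2) * ∫ s in 0..y, leftMode r y / modeWronskian r L *
          (leftMode r (L - s) * q s) := by
        gcongr
        exact intervalIntegral.integral_mono_on hy.1
          (Continuous.intervalIntegrable (by fun_prop) _ _)
          (Continuous.intervalIntegrable (by fun_prop) _ _) hkernel
    _ ≤ (1 + r ^ 2) * (leftMode r y / modeWronskian r L *
          ∫ s in 0..L, leftMode r (L - s) * q s) := by
        rw [intervalIntegral.integral_const_mul]
        gcongr
        exact div_nonneg (hA y hy).le hD.le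
    _ = robinCoeff r L q * leftMode r y := by
        rw [robinCoeff]
        ring

lemma robinSolution_nonneg (hr : 0 < r) (hrL : r * L + 2 * arctan r < π)
    (hq : Continuous q) (hq0 : ∀ s ∈ Icc 0 L, 0 ≤ q s) {y : ℝ} (hy : y ∈ Icc 0 L) :
    0 ≤ robinSolution r L q y :=
  sub_nonneg.2 (duhamel_le_robinCoeff_mul hr hrL hq hq0 hy)

lemma robinSolution_le (hr : 0 < r) (hrL : r * L + 2 * arctan r < π)
    (hq0 : ∀ s ∈ Icc 0 L, 0 ≤ q s) {y : ℝ} (hy : y ∈ Icc 0 L) :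
    robinSolution r L q y ≤ robinCoeff r L q * (y + 1) := by
  have := mul_le_mul_of_nonneg_left (leftMode_le_add_one hr hy.1)
    (robinCoeff_nonneg hr (hy.1.trans hy.2) hrL hq0)
  have := duhamel_nonneg hr hrL hq0 hy
  rw [robinSolution]
  nlinarith

end Admissible

lemma sqrt_mul_add_two_mul_arctan_lt_pi {ρ L : ℝ} (hρ0 : 0 ≤ ρ) (hρ : ρ < rhoStar L) :
    √ρ * L + 2 * arctan √ρ < π := by
  -- `cos θ - √t sin θ = √(1 + t) cos (ψ t)` for `θ = √t L / 2`, so a `t ∈ [0, ρ]` with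
  -- `ψ t = π / 2` would lie in the set defining `rhoStar L`
  by_contra! h
  let ψ : ℝ → ℝ := fun t => √t * L / 2 + arctan √t
  obtain ⟨c, hc, hψc⟩ : π / 2 ∈ ψ '' Icc 0 ρ :=
    intermediate_value_Icc hρ0 (by fun_prop : Continuous ψ).continuousOn
      ⟨by simpa [ψ] using pi_div_two_pos.le, by simp only [ψ]; linarith⟩
  have hroot : c ∈ {ρ : ℝ | 0 ≤ ρ ∧ cos (√ρ * L / 2) - √ρ * sin (√ρ * L / 2) = 0} :=
    ⟨hc.1, by rw [cos_sub_mul_sin_eq, show √c * L / 2 + arctan √c = π / 2 from hψc,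
      cos_pi_div_two, mul_zero]⟩
  have : rhoStar L ≤ c := csInf_le ⟨0, fun _ h => h.1⟩ hroot
  linarith [hc.2]

lemma ofReal_add_mul_lintegral_indicator_robinSolution {r L : ℝ} {q : ℝ → ℝ} (hr : 0 < r)
    (hrL : r * L + 2 * arctan r < π) (hq : Continuous q) (hq0 : ∀ s ∈ Icc 0 L, 0 ≤ q s)
    {y : ℝ} (hy : y ∈ Icc 0 L) :
    ENNReal.ofReal (q y) + ENNReal.ofReal (1 + r ^ 2) * ∫⁻ s,
        (Icc 0 L).indicator (fun t => ENNReal.ofReal (q t + robinSolution r L q t)) (y + s)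
          ∂lapMeasure =
      (Icc 0 L).indicator (fun t => ENNReal.ofReal (q t + robinSolution r L q t)) y := by
  have hL : 0 ≤ L := hy.1.trans hy.2
  rw [lintegral_lapMeasure_indicator (u := fun t => q t + robinSolution r L q t)
      (hq.add (continuous_robinSolution hr.ne' hq)) hL
      (fun t ht => add_nonneg (hq0 t ht) (robinSolution_nonneg hr hrL hq hq0 ht)) y,
    ← ENNReal.ofReal_mul (by positivity), integral_mul_laplaceKernel_robinSolution hr.ne' hq
      (modeWronskian_pos hr hL hrL).ne' hy,
    ← ENNReal.ofReal_add (hq0 y hy) (robinSolution_nonneg hr hrL hq hq0 hy), indicator_of_mem hy]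

section Qfun

variable {a b : ℝ}

lemma Qfun_nonneg (a b x : ℝ) : 0 ≤ Qfun a b x := by
  unfold Qfun
  split_ifs
  exacts [sub_nonneg.2 (cos_le_one _), le_rfl]

lemma one_sub_cos_eq_zero_of_mem_pair (hab : a < b) {x : ℝ} (hx : x ∈ ({a, b} : Set ℝ)) :
    1 - cos (2 * π * (x - a) / (b - a)) = 0 := by
  rcases hx with rfl | rfl
  · simp
  · rw [mul_div_assoc, div_self (sub_ne_zero.2 hab.ne'), mul_one, cos_two_pi, sub_self]

lemma Qfun_eq_zero_of_notMem_Ioo (hab : a < b) {x : ℝ} (hx : x ∉ Ioo a b) : Qfun a b x = 0 := by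
  unfold Qfun
  split_ifs with h
  · exact one_sub_cos_eq_zero_of_mem_pair hab (Icc_sdiff_Ioo_same hab.le ▸ ⟨h, hx⟩)
  · rfl

lemma continuous_Qfun (hab : a < b) : Continuous (Qfun a b) := by
  refine Continuous.if (fun x hx => ?_) (by fun_prop) continuous_const
  rw [ofPred_mem_eq, frontier_Icc hab.le] at hx
  exact one_sub_cos_eq_zero_of_mem_pair hab hx

lemma integral_Qfun (hab : a < b) : ∫ x in a..b, Qfun a b x = b - a := by
  have hba : b - a ≠ 0 := sub_ne_zero.2 hab.ne'
  have hderiv : ∀ x, HasDerivAt (fun x => x - (b - a) / (2 * π) * sin (2 * π * (x - a) / (b - a)))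
      (1 - cos (2 * π * (x - a) / (b - a))) x := by
    intro x
    refine ((hasDerivAt_id x).sub ((((((hasDerivAt_id x).sub_const a).const_mul (2 * π)).div_const
      (b - a)).sin).const_mul _)).congr_deriv ?_
    simp only [id]
    field_simp
  rw [intervalIntegral.integral_congr (g := fun x => 1 - cos (2 * π * (x - a) / (b - a)))
      fun x hx => by rw [Qfun, if_pos (uIcc_of_le hab.le ▸ hx)],
    intervalIntegral.integral_eq_sub_of_hasDerivAt (fun x _ => hderiv x)
      (Continuous.intervalIntegrable (by fun_prop) _ _), mul_div_assoc, div_self hba]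
  simp

lemma integral_Qfun_of_subset {L : ℝ} (hab : a < b) (hsub : Icc a b ⊆ Icc 0 L) :
    ∫ x in 0..L, Qfun a b x = b - a := by
  have ha : 0 ≤ a := (hsub ⟨le_rfl, hab.le⟩).1
  have hb : b ≤ L := (hsub ⟨hab.le, le_rfl⟩).2
  have hi : ∀ c d, IntervalIntegrable (Qfun a b) volume c d :=
    (continuous_Qfun hab).intervalIntegrable
  rw [← intervalIntegral.integral_add_adjacent_intervals (hi 0 a) (hi a L),
    ← intervalIntegral.integral_add_adjacent_intervals (hi a b) (hi b L), integral_Qfun hab,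
    intervalIntegral.integral_congr (g := 0) fun x hx =>
      Qfun_eq_zero_of_notMem_Ioo hab fun h => (uIcc_of_le ha ▸ hx).2.not_gt h.1,
    intervalIntegral.integral_congr (a := b) (g := 0) fun x hx =>
      Qfun_eq_zero_of_notMem_Ioo hab fun h => (uIcc_of_le hb ▸ hx).1.not_gt h.2]
  simp

end Qfun

lemma robinCoeff_Qfun_le {r L a b : ℝ} (hr : 0 < r) (hrL : r * L + 2 * arctan r < π) (hab : a < b)
    (hsub : Icc a b ⊆ Icc 0 L) :
    robinCoeff r L (Qfun a b) ≤ (b - a) * (1 + r ^ 2) *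
      ((sin (r * L) / r + (b + 1)) / modeWronskian r L) := by
  have ha := hsub (left_mem_Icc.2 hab.le)
  have hL : 0 ≤ L := ha.1.trans ha.2
  have hα : 0 < arctan r := arctan_pos.2 hr
  have hsin : 0 ≤ sin (r * L) := sin_nonneg_of_nonneg_of_le_pi (by positivity) (by linarith)
  have hQ := continuous_Qfun hab
  have hpt : ∀ s ∈ Icc 0 L,
      leftMode r (L - s) * Qfun a b s ≤ (sin (r * L) / r + (b + 1)) * Qfun a b s := by
    intro s hs
    by_cases hsb : s ≤ b
    · exact mul_le_mul_of_nonneg_right (by linarith [leftMode_sub_le hr hsin hs.1])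
        (Qfun_nonneg a b s)
    · rw [Qfun_eq_zero_of_notMem_Ioo hab fun h => hsb h.2.le, mul_zero, mul_zero]
  have hint :
      ∫ s in 0..L, leftMode r (L - s) * Qfun a b s ≤ (sin (r * L) / r + (b + 1)) * (b - a) :=
    calc ∫ s in 0..L, leftMode r (L - s) * Qfun a b s
        ≤ ∫ s in 0..L, (sin (r * L) / r + (b + 1)) * Qfun a b s :=
          intervalIntegral.integral_mono_on hL (Continuous.intervalIntegrable (by fun_prop) _ _)
            (Continuous.intervalIntegrable (by fun_prop) _ _) hpt
      _ = (sin (r * L) / r + (b + 1)) * (b - a) := by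
          rw [intervalIntegral.integral_const_mul, integral_Qfun_of_subset hab hsub]
  calc robinCoeff r L (Qfun a b)
      ≤ (1 + r ^ 2) / modeWronskian r L * ((sin (r * L) / r + (b + 1)) * (b - a)) :=
        mul_le_mul_of_nonneg_left hint
          (div_nonneg (by positivity) (modeWronskian_pos hr hL hrL).le)
    _ = _ := by ring

lemma Si2_sq {s : ℝ} (hs : 0 < s) (y : ℝ) : Si2 (s ^ 2) y = sin (s * y) / s := by
  rw [Si2, if_pos (by positivity), sqrt_sq hs.le]

lemma Co2_sq {s : ℝ} (hs : 0 < s) (y : ℝ) : Co2 (s ^ 2) y = cos (s * y) := by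
  rw [Co2, if_pos (by positivity), sqrt_sq hs.le]

lemma Si2_Co2_ratio_eq {r L : ℝ} (hr : 0 < r) (hL : 0 < L) (c : ℝ) :
    (Si2 (r ^ 2 * L ^ 2) 1 + c / L) /
        ((1 - r ^ 2) * Si2 (r ^ 2 * L ^ 2) 1 + 2 * Co2 (r ^ 2 * L ^ 2) 1 / L) =
      (sin (r * L) / r + c) / modeWronskian r L := by
  have hrL := mul_pos hr hL
  rw [← mul_pow, Si2_sq hrL, Co2_sq hrL, mul_one,
    show sin (r * L) / (r * L) + c / L = (sin (r * L) / r + c) / L by field_simp,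
    show (1 - r ^ 2) * (sin (r * L) / (r * L)) + 2 * cos (r * L) / L =
      modeWronskian r L / L by
      simp only [modeWronskian, leftMode, leftModeDeriv]; field_simp; ring,
    div_div_div_cancel_right₀ hL.ne']

/-- for `ρ ∈ (0, min(ρ_L^*, 4π²/(b−a)²))` and `x ∈ [0,L]`, the upper bound
`F_{a,b}(x, ρ, L) ≤ (b−a)(1+ρ)·(4π²/(4π² − ρ(b−a)²))·((Si(ρL²,1) + (b+1)/L) /
((1−ρ)·Si(ρL²,1) + 2·Co(ρL²,1)/L))·(x+1) + Q_{a,b}(x)`. -/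
theorem Ffun_upper_pos (μ : Measure Ω) (X : ℕ → Ω → ℝ) (h : IsLaplaceWalk μ X)
    (L a b : ℝ) (hL : 0 < L) (hab : a < b)
    (hsub : Set.Icc a b ⊆ Set.Icc 0 L) (ρ : ℝ)
    (hρ : ρ ∈ Set.Ioo (0 : ℝ) (min (rhoStar L) (4 * Real.pi ^ 2 / (b - a) ^ 2)))
    (x : ℝ) (hx : x ∈ Set.Icc (0 : ℝ) L) :
    Ffun μ X a b ρ L x ≤
      ENNReal.ofReal
        ((b - a) * (1 + ρ) * (4 * Real.pi ^ 2 / (4 * Real.pi ^ 2 - ρ * (b - a) ^ 2)) *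
            ((Si2 (ρ * L ^ 2) 1 + (b + 1) / L) /
              ((1 - ρ) * Si2 (ρ * L ^ 2) 1 + 2 * Co2 (ρ * L ^ 2) 1 / L)) *
            (x + 1) +
          Qfun a b x) := by
  obtain ⟨hρ0, hρ⟩ := hρ
  have hrL := sqrt_mul_add_two_mul_arctan_lt_pi hρ0.le (hρ.trans_le (min_le_left _ _))
  have hρab : ρ * (b - a) ^ 2 < 4 * π ^ 2 :=
    (lt_div_iff₀ (pow_pos (sub_pos.2 hab) 2)).1 (hρ.trans_le (min_le_right _ _))
  obtain ⟨r, hr, rfl⟩ : ∃ r, 0 < r ∧ ρ = r ^ 2 := ⟨√ρ, sqrt_pos.2 hρ0, (sq_sqrt hρ0.le).symm⟩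
  rw [sqrt_sq hr.le] at hrL
  have hQ0 : ∀ s ∈ Icc 0 L, 0 ≤ Qfun a b s := fun s _ => Qfun_nonneg a b s
  have hF := lintegral_tsum_occupationTerm_le (continuous_Qfun hab).measurable (by positivity)
    (fun y hy => (ofReal_add_mul_lintegral_indicator_robinSolution hr hrL (continuous_Qfun hab)
      hQ0 hy).le) h x
  rw [indicator_of_mem hx] at hF
  refine hF.trans (ENNReal.ofReal_le_ofReal ?_)
  have hK : 1 ≤ 4 * π ^ 2 / (4 * π ^ 2 - r ^ 2 * (b - a) ^ 2) :=
    (one_le_div (by linarith)).2 (sub_le_self _ (by positivity))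
  have hC := robinCoeff_Qfun_le hr hrL hab hsub
  have hCK := hC.trans (le_mul_of_one_le_right ((robinCoeff_nonneg hr hL.le hrL hQ0).trans hC) hK)
  rw [Si2_Co2_ratio_eq hr hL]
  linarith [robinSolution_le hr hrL hQ0 hx,
    mul_le_mul_of_nonneg_right hCK (by linarith [hx.1] : (0 : ℝ) ≤ x + 1)]
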